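/- arXiv:2006.01662 — 2 statements merged into one kernel-verified Lean document; each statement's English description precedes it below -/
import Mathlib

section
/- Let T be a tree on p vertices with maximum degree d_max, rooted so that each vertex has at most d_max − 1 children. Assign each edge a score in {0,1}, with total score S. Process vertices in reverse breadth-first-search order: whenever the subtree rooted at a vertex i in the current forest has total score at least m, remove that subtree. Suppose every removed subtree has total score strictly less than (d_max−1)(m+1). If the final remaining tree has score less than m, then the number B of removed subtrees satisfies (S − m)/((d_max−1)(m+1)+1) ≤ B ≤ S/m. -/
/-- the score-decrease accounting of the subtree-removal process.  The tree
has maximum degree `d_max` (so at most `d_max − 1` children per vertex) and initial total edge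
score `S`; `s t` is the total score of the remaining tree after `t` removals.  Each removal
decreases the score by at least `m` (the removed subtree has score ≥ m) and by at most
`(d_max−1)(m+1)+1` (every removed subtree has score < (d_max−1)(m+1), plus the edge to its
parent).  If the final score lies in `[0, m)`, then the number `B` of removed subtrees
satisfies `(S − m)/((d_max−1)(m+1)+1) ≤ B ≤ S/m`. -/
theorem stmt4 (dmax : ℕ) (hdmax : 2 ≤ dmax) (m S : ℝ) (hm : 0 < m)
    (B : ℕ) (s : ℕ → ℝ) (hs0 : s 0 = S)
    (hdec : ∀ t < B, m ≤ s t - s (t + 1) ∧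
      s t - s (t + 1) ≤ ((dmax : ℝ) - 1) * (m + 1) + 1)
    (hfin : 0 ≤ s B ∧ s B < m) :
    (S - m) / (((dmax : ℝ) - 1) * (m + 1) + 1) ≤ (B : ℝ) ∧ (B : ℝ) ≤ S / m := by
  set D : ℝ := ((dmax : ℝ) - 1) * (m + 1) + 1 with hD
  have hD1 : (1 : ℝ) ≤ (dmax : ℝ) := by
    have : (2 : ℝ) ≤ (dmax : ℝ) := by exact_mod_cast hdmax
    linarith
  have hDpos : 0 < D := by
    have : 0 ≤ ((dmax : ℝ) - 1) * (m + 1) :=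
      mul_nonneg (by linarith) (by linarith)
    linarith
  have key : ∀ t ≤ B, (t : ℝ) * m ≤ S - s t ∧ S - s t ≤ (t : ℝ) * D := by
    intro t ht
    induction t with
    | zero => simp [hs0]
    | succ n ih =>
      have hn : n ≤ B := Nat.le_of_succ_le ht
      have hnB : n < B := ht
      obtain ⟨h1, h2⟩ := ih hn
      obtain ⟨h3, h4⟩ := hdec n hnB
      constructor <;> push_cast <;> nlinarith
  obtain ⟨k1, k2⟩ := key B le_rfl
  constructor
  · rw [div_le_iff₀ hDpos]
    nlinarith [hfin.2]
  · rw [le_div_iff₀ hm]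
    nlinarith [hfin.1]
end

section
/- Let f : ℝ^p → ℝ be differentiable and let K ⊆ ℝ^p be a subspace. Suppose for all θ₁, θ₂ ∈ K: f(θ₂) ≥ f(θ₁) + ⟨θ₂ − θ₁, ∇f(θ₁)⟩ + (α/2)‖θ₂ − θ₁‖² and f(θ₂) ≤ f(θ₁) + ⟨θ₂ − θ₁, ∇f(θ₁)⟩ + (L/2)‖θ₂ − θ₁‖², with 0 < α ≤ L. Fix θ₁ ∈ K, let u = P_K(θ₁ − ∇f(θ₁)/L) and let v be a minimizer of f over K. Then ‖u − v‖_2 ≤ √(1 − α/L) · ‖θ₁ − v‖_2. -/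
/-!
Since `θ₁ ∈ K`, the projected gradient step is `u = θ₁ - L⁻¹ • g` with `g = P_K ∇f(θ₁)`, and
against directions in `K` the gradient may be replaced by `g`. Chaining strong convexity at `v`,
minimality `f v ≤ f u` and smoothness at `u` gives
`α ‖θ₁ - v‖² + ‖g‖² / L ≤ 2 ⟪θ₁ - v, g⟫`; expanding `‖(θ₁ - v) - L⁻¹ • g‖²` with this bound
leaves `(1 - α / L) ‖θ₁ - v‖²`.
-/

open RealInnerProductSpace

variable {E : Type*} [NormedAddCommGroup E] [InnerProductSpace ℝ E]

theorem Submodule.inner_starProjection_right_of_mem (K : Submodule ℝ E)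
    [K.HasOrthogonalProjection] {w : E} (hw : w ∈ K) (x : E) :
    ⟪w, K.starProjection x⟫ = ⟪w, x⟫ := by
  rw [← K.inner_starProjection_left_eq_right, K.starProjection_eq_self_iff.2 hw]

theorem Submodule.starProjection_sub_smul_of_mem (K : Submodule ℝ E)
    [K.HasOrthogonalProjection] {θ : E} (hθ : θ ∈ K) (c : ℝ) (x : E) :
    K.starProjection (θ - c • x) = θ - c • K.starProjection x := by
  rw [map_sub, map_smul, K.starProjection_eq_self_iff.2 hθ]

theorem two_inner_ge_of_gradientStep {f : E → ℝ} {α L : ℝ} (hL : 0 < L) {θ v g : E}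
    (hconv : f θ + ⟪v - θ, g⟫ + α / 2 * ‖v - θ‖ ^ 2 ≤ f v)
    (hsmooth : f (θ - L⁻¹ • g) ≤
      f θ + ⟪θ - L⁻¹ • g - θ, g⟫ + L / 2 * ‖θ - L⁻¹ • g - θ‖ ^ 2)
    (hmin : f v ≤ f (θ - L⁻¹ • g)) :
    α * ‖θ - v‖ ^ 2 + L⁻¹ * ‖g‖ ^ 2 ≤ 2 * ⟪θ - v, g⟫ := by
  have hstep : θ - L⁻¹ • g - θ = -(L⁻¹ • g) := by abel
  have hinner : ⟪θ - L⁻¹ • g - θ, g⟫ = -(L⁻¹ * ‖g‖ ^ 2) := by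
    rw [hstep, inner_neg_left, real_inner_smul_left, real_inner_self_eq_norm_sq]
  have hnorm : L / 2 * ‖θ - L⁻¹ • g - θ‖ ^ 2 = L⁻¹ / 2 * ‖g‖ ^ 2 := by
    rw [hstep, norm_neg, norm_smul, Real.norm_of_nonneg (inv_nonneg.2 hL.le)]
    field_simp
  have hvθ : ⟪v - θ, g⟫ = -⟪θ - v, g⟫ := by rw [← inner_neg_left, neg_sub]
  rw [hinner, hnorm] at hsmooth
  rw [hvθ, norm_sub_rev] at hconv
  linarith

theorem norm_gradientStep_sub_sq_le {α L : ℝ} (hL : 0 < L) {θ v g : E}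
    (h : α * ‖θ - v‖ ^ 2 + L⁻¹ * ‖g‖ ^ 2 ≤ 2 * ⟪θ - v, g⟫) :
    ‖θ - L⁻¹ • g - v‖ ^ 2 ≤ (1 - α / L) * ‖θ - v‖ ^ 2 := by
  have hexpand : ‖θ - L⁻¹ • g - v‖ ^ 2 =
      ‖θ - v‖ ^ 2 - 2 * L⁻¹ * ⟪θ - v, g⟫ + L⁻¹ ^ 2 * ‖g‖ ^ 2 := by
    rw [sub_right_comm, norm_sub_sq_real, real_inner_smul_right, norm_smul,
      Real.norm_of_nonneg (inv_nonneg.2 hL.le)]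
    ring
  have hscaled := mul_le_mul_of_nonneg_left h (inv_nonneg.2 hL.le)
  rw [hexpand, div_eq_mul_inv]
  nlinarith

theorem le_sqrt_mul_of_sq_le_mul_sq {a b c : ℝ} (hb : 0 ≤ b) (h : a ^ 2 ≤ c * b ^ 2) :
    a ≤ √c * b := by
  rw [← Real.sqrt_sq hb, ← Real.sqrt_mul' c (sq_nonneg b)]
  exact (le_abs_self a).trans (Real.abs_le_sqrt h)

theorem stmt8_general {p : ℕ} (f : EuclideanSpace ℝ (Fin p) → ℝ)
    (K : Submodule ℝ (EuclideanSpace ℝ (Fin p))) (α L : ℝ) (hα : 0 < α) (hαL : α ≤ L)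
    (hconv : ∀ θ₁ ∈ K, ∀ θ₂ ∈ K,
      f θ₁ + ⟪θ₂ - θ₁, gradient f θ₁⟫ + α / 2 * ‖θ₂ - θ₁‖ ^ 2 ≤ f θ₂)
    (hsmooth : ∀ θ₁ ∈ K, ∀ θ₂ ∈ K,
      f θ₂ ≤ f θ₁ + ⟪θ₂ - θ₁, gradient f θ₁⟫ + L / 2 * ‖θ₂ - θ₁‖ ^ 2)
    (θ₁ : EuclideanSpace ℝ (Fin p)) (hθ₁ : θ₁ ∈ K)
    (v : EuclideanSpace ℝ (Fin p)) (hvK : v ∈ K) (hvmin : ∀ x ∈ K, f v ≤ f x) :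
    ‖(K.orthogonalProjectionOnto (θ₁ - (1 / L) • gradient f θ₁) : EuclideanSpace ℝ (Fin p)) - v‖ ≤
      Real.sqrt (1 - α / L) * ‖θ₁ - v‖ := by
  have hL : 0 < L := hα.trans_le hαL
  set g := K.starProjection (gradient f θ₁)
  have hu : (K.orthogonalProjectionOnto (θ₁ - (1 / L) • gradient f θ₁) :
      EuclideanSpace ℝ (Fin p)) = θ₁ - L⁻¹ • g := by
    rw [K.coe_orthogonalProjectionOnto_apply, one_div, K.starProjection_sub_smul_of_mem hθ₁]
  have huK : θ₁ - L⁻¹ • g ∈ K := K.sub_mem hθ₁ (K.smul_mem _ (K.starProjection_apply_mem _))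
  have hconv_v := hconv θ₁ hθ₁ v hvK
  have hsmooth_u := hsmooth θ₁ hθ₁ _ huK
  rw [← K.inner_starProjection_right_of_mem (K.sub_mem hvK hθ₁)] at hconv_v
  rw [← K.inner_starProjection_right_of_mem (K.sub_mem huK hθ₁)] at hsmooth_u
  have hdescent := two_inner_ge_of_gradientStep hL hconv_v hsmooth_u (hvmin _ huK)
  rw [hu]
  exact le_sqrt_mul_of_sq_le_mul_sq (norm_nonneg _) (norm_gradientStep_sub_sq_le hL hdescent)

/-- if `f` is differentiable, `α`-restricted strongly convex and `L`-restricted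
smooth on a subspace `K` (with `0 < α ≤ L`), `θ₁ ∈ K`, `u = P_K(θ₁ − ∇f(θ₁)/L)`, and `v`
minimizes `f` over `K`, then `‖u − v‖ ≤ √(1 − α/L) ‖θ₁ − v‖`. -/
theorem stmt8 {p : ℕ} (f : EuclideanSpace ℝ (Fin p) → ℝ) (hf : Differentiable ℝ f)
    (K : Submodule ℝ (EuclideanSpace ℝ (Fin p))) (α L : ℝ) (hα : 0 < α) (hαL : α ≤ L)
    (hconv : ∀ θ₁ ∈ K, ∀ θ₂ ∈ K,
      f θ₁ + ⟪θ₂ - θ₁, gradient f θ₁⟫ + α / 2 * ‖θ₂ - θ₁‖ ^ 2 ≤ f θ₂)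
    (hsmooth : ∀ θ₁ ∈ K, ∀ θ₂ ∈ K,
      f θ₂ ≤ f θ₁ + ⟪θ₂ - θ₁, gradient f θ₁⟫ + L / 2 * ‖θ₂ - θ₁‖ ^ 2)
    (θ₁ : EuclideanSpace ℝ (Fin p)) (hθ₁ : θ₁ ∈ K)
    (v : EuclideanSpace ℝ (Fin p)) (hvK : v ∈ K) (hvmin : ∀ x ∈ K, f v ≤ f x) :
    ‖(K.orthogonalProjectionOnto (θ₁ - (1 / L) • gradient f θ₁) : EuclideanSpace ℝ (Fin p)) - v‖ ≤
      Real.sqrt (1 - α / L) * ‖θ₁ - v‖ :=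
  stmt8_general f K α L hα hαL hconv hsmooth θ₁ hθ₁ v hvK hvmin
end
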